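/- arXiv:1709.03706 — 4 statements merged into one kernel-verified Lean document; each statement's English description precedes it below -/
import Mathlib

section
/- Let D_ℓ, D_r be positive definite diagonal (d−1)×(d−1) matrices whose smallest diagonal entries are κ₂^ℓ and κ₂^r respectively, and let U_ℓ, U_r be orthogonal (d−1)×(d−1) matrices. If 1/κ₂^ℓ + 1/κ₂^r < 2a for some a > 0, then there exists η ∈ (0,1) such that for all α, β ∈ ℝ^{d−1}: 0 ≤ 2aη(αᵀ D_ℓ α + βᵀ D_r β) + 2 αᵀ U_ℓᵀ U_r β − |α|² − |β|². -/
open Matrix in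
theorem stmt5 (m : ℕ) (a : ℝ) (ha : 0 < a)
    (dl dr : Fin m → ℝ) (hdl : ∀ i, 0 < dl i) (hdr : ∀ i, 0 < dr i)
    (κl κr : ℝ) (hκl : ∀ i, κl ≤ dl i) (hκl' : ∃ i, dl i = κl)
    (hκr : ∀ i, κr ≤ dr i) (hκr' : ∃ i, dr i = κr)
    (Ul Ur : Matrix (Fin m) (Fin m) ℝ) (hUl : Ulᵀ * Ul = 1) (hUr : Urᵀ * Ur = 1)
    (hcurv : 1 / κl + 1 / κr < 2 * a) :
    ∃ η ∈ Set.Ioo (0:ℝ) 1, ∀ α β : Fin m → ℝ,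
      0 ≤ 2 * a * η * (α ⬝ᵥ Matrix.diagonal dl *ᵥ α + β ⬝ᵥ Matrix.diagonal dr *ᵥ β)
        + 2 * (α ⬝ᵥ (Ulᵀ * Ur) *ᵥ β) - ∑ i, α i ^ 2 - ∑ i, β i ^ 2 := by
  obtain ⟨i0, hi0⟩ := hκl'
  obtain ⟨j0, hj0⟩ := hκr'
  have hκlpos : 0 < κl := hi0 ▸ hdl i0
  have hκrpos : 0 < κr := hj0 ▸ hdr j0
  set η : ℝ := (1 / κl + 1 / κr) / (2 * a) with hη
  have hsum : 0 < 1 / κl + 1 / κr := by positivity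
  have h2a : (0:ℝ) < 2 * a := by linarith
  have hηpos : 0 < η := div_pos hsum h2a
  have hηlt : η < 1 := (div_lt_one h2a).mpr hcurv
  have hkey : 2 * a * η = 1 / κl + 1 / κr := by
    rw [hη]
    field_simp
  refine ⟨η, ⟨hηpos, hηlt⟩, fun α β => ?_⟩
  set u : Fin m → ℝ := Ul *ᵥ α with hu
  set v : Fin m → ℝ := Ur *ᵥ β with hv
  have hcross : α ⬝ᵥ (Ulᵀ * Ur) *ᵥ β = u ⬝ᵥ v := by
    rw [← Matrix.mulVec_mulVec, Matrix.dotProduct_mulVec, Matrix.vecMul_transpose]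
  have huu : u ⬝ᵥ u = ∑ i, α i ^ 2 := by
    have h : α ⬝ᵥ (Ulᵀ * Ul) *ᵥ α = u ⬝ᵥ u := by
      rw [← Matrix.mulVec_mulVec, Matrix.dotProduct_mulVec, Matrix.vecMul_transpose]
    rw [← h, hUl, Matrix.one_mulVec]
    simp [dotProduct, sq]
  have hvv : v ⬝ᵥ v = ∑ i, β i ^ 2 := by
    have h : β ⬝ᵥ (Urᵀ * Ur) *ᵥ β = v ⬝ᵥ v := by
      rw [← Matrix.mulVec_mulVec, Matrix.dotProduct_mulVec, Matrix.vecMul_transpose]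
    rw [← h, hUr, Matrix.one_mulVec]
    simp [dotProduct, sq]
  set c : ℝ := κl / κr with hc
  have hcpos : 0 < c := by positivity
  have hsq : 0 ≤ c * (u ⬝ᵥ u) + 2 * (u ⬝ᵥ v) + c⁻¹ * (v ⬝ᵥ v) := by
    set s : ℝ := Real.sqrt c with hs
    have hs2 : s ^ 2 = c := Real.sq_sqrt hcpos.le
    have hspos : 0 < s := Real.sqrt_pos.mpr hcpos
    have : 0 ≤ ∑ i, (s * u i + s⁻¹ * v i) ^ 2 :=
      Finset.sum_nonneg fun i _ => sq_nonneg _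
    calc (0:ℝ) ≤ ∑ i, (s * u i + s⁻¹ * v i) ^ 2 := this
      _ = c * (u ⬝ᵥ u) + 2 * (u ⬝ᵥ v) + c⁻¹ * (v ⬝ᵥ v) := by
          simp only [dotProduct, Finset.mul_sum, ← Finset.sum_add_distrib]
          refine Finset.sum_congr rfl fun i _ => ?_
          have hsne : s ≠ 0 := hspos.ne'
          have hsinv : s⁻¹ ^ 2 = c⁻¹ := by rw [← hs2]; exact (inv_pow s 2)
          have h1 : s * s⁻¹ = 1 := mul_inv_cancel₀ hsne
          rw [← hs2]
          field_simp
          ring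
  have hA : κl * ∑ i, α i ^ 2 ≤ α ⬝ᵥ Matrix.diagonal dl *ᵥ α := by
    simp only [Matrix.mulVec_diagonal, dotProduct, Finset.mul_sum]
    refine Finset.sum_le_sum fun i _ => ?_
    nlinarith [sq_nonneg (α i), hκl i]
  have hB : κr * ∑ i, β i ^ 2 ≤ β ⬝ᵥ Matrix.diagonal dr *ᵥ β := by
    simp only [Matrix.mulVec_diagonal, dotProduct, Finset.mul_sum]
    refine Finset.sum_le_sum fun i _ => ?_
    nlinarith [sq_nonneg (β i), hκr i]
  rw [hkey, hcross, huu, hvv] at *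
  set S : ℝ := 1 / κl + 1 / κr with hS
  set Sa : ℝ := ∑ i, α i ^ 2
  set Sb : ℝ := ∑ i, β i ^ 2
  set A : ℝ := α ⬝ᵥ Matrix.diagonal dl *ᵥ α
  set B : ℝ := β ⬝ᵥ Matrix.diagonal dr *ᵥ β
  have hA' : Sa + c * Sa ≤ S * A := by
    have h := mul_le_mul_of_nonneg_left hA hsum.le
    have heq : S * (κl * Sa) = Sa + c * Sa := by
      rw [hS, hc]; field_simp
    linarith [heq ▸ h]
  have hB' : Sb + c⁻¹ * Sb ≤ S * B := by
    have h := mul_le_mul_of_nonneg_left hB hsum.le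
    have heq : S * (κr * Sb) = Sb + c⁻¹ * Sb := by
      rw [hS, hc]; field_simp; ring
    linarith [heq ▸ h]
  have hdist : S * (A + B) = S * A + S * B := by ring
  rw [hdist]
  clear_value c S Sa Sb A B u v
  linarith [hA', hB', hsq]
end

section
/- Let a > 0, η ∈ (0,1), ĉ = (1+η⁻¹)/2, and let H_ℓ, H_r be symmetric positive definite (d−1)×(d−1) matrices with orthogonal diagonalizations H_i = U_i D_i U_iᵀ such that the block matrix A(η) = [[2aη D_ℓ − I, U_ℓᵀU_r],[U_rᵀU_ℓ, 2aη D_r − I]] is positive semi-definite. Define G(x,y) = x₁ + y₁ − (1/(4a))|x̃ − ỹ|² on (ĉ·P(H_ℓ)) × (ĉ·P(H_r)). Then G(x,y) ≥ ((1−η)/2)(x₁ + y₁) ≥ 0 for all (x,y) in this domain. -/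
open Matrix in
theorem stmt10 (m : ℕ) (a η : ℝ) (ha : 0 < a) (hη : η ∈ Set.Ioo (0:ℝ) 1)
    (ch : ℝ) (hch : ch = (1 + η⁻¹) / 2)
    (Hl Hr : Matrix (Fin m) (Fin m) ℝ) (hHl : Hl.PosDef) (hHr : Hr.PosDef)
    (dl dr : Fin m → ℝ) (Ul Ur : Matrix (Fin m) (Fin m) ℝ)
    (hUl : Ulᵀ * Ul = 1) (hUr : Urᵀ * Ur = 1)
    (hHl' : Hl = Ul * Matrix.diagonal dl * Ulᵀ) (hHr' : Hr = Ur * Matrix.diagonal dr * Urᵀ)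
    (hA : ∀ α β : Fin m → ℝ,
      0 ≤ 2 * a * η * (α ⬝ᵥ Matrix.diagonal dl *ᵥ α + β ⬝ᵥ Matrix.diagonal dr *ᵥ β)
        + 2 * (α ⬝ᵥ (Ulᵀ * Ur) *ᵥ β) - ∑ i, α i ^ 2 - ∑ i, β i ^ 2)
    (x y : ℝ × (Fin m → ℝ))
    (hx : (1/2) * (x.2 ⬝ᵥ Hl *ᵥ x.2) ≤ ch * x.1)
    (hy : (1/2) * (y.2 ⬝ᵥ Hr *ᵥ y.2) ≤ ch * y.1) :
    ((1 - η) / 2) * (x.1 + y.1) ≤ x.1 + y.1 - (1 / (4 * a)) * ∑ i, (x.2 i - y.2 i) ^ 2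
      ∧ 0 ≤ ((1 - η) / 2) * (x.1 + y.1) := by
  obtain ⟨hη0, hη1⟩ := hη
  have hch0 : 0 < ch := by
    rw [hch]; have := inv_pos.mpr hη0; linarith
  have hUl2 : Ul * Ulᵀ = 1 := mul_eq_one_comm.mp hUl
  have hUr2 : Ur * Urᵀ = 1 := mul_eq_one_comm.mp hUr
  set α := Ulᵀ *ᵥ x.2 with hα
  set β := Urᵀ *ᵥ y.2 with hβ
  have hUα : Ul *ᵥ α = x.2 := by
    rw [hα, Matrix.mulVec_mulVec, hUl2, Matrix.one_mulVec]
  have hUβ : Ur *ᵥ β = y.2 := by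
    rw [hβ, Matrix.mulVec_mulVec, hUr2, Matrix.one_mulVec]
  have hxq : α ⬝ᵥ Matrix.diagonal dl *ᵥ α = x.2 ⬝ᵥ Hl *ᵥ x.2 := by
    rw [hHl', ← Matrix.mulVec_mulVec, ← Matrix.mulVec_mulVec,
      Matrix.dotProduct_mulVec x.2 Ul, ← Matrix.mulVec_transpose, ← hα]
  have hyq : β ⬝ᵥ Matrix.diagonal dr *ᵥ β = y.2 ⬝ᵥ Hr *ᵥ y.2 := by
    rw [hHr', ← Matrix.mulVec_mulVec, ← Matrix.mulVec_mulVec,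
      Matrix.dotProduct_mulVec y.2 Ur, ← Matrix.mulVec_transpose, ← hβ]
  have hαα : ∑ i, α i ^ 2 = x.2 ⬝ᵥ x.2 := by
    have : α ⬝ᵥ α = x.2 ⬝ᵥ x.2 := by
      rw [hα, Matrix.dotProduct_mulVec, ← Matrix.mulVec_transpose,
        Matrix.mulVec_mulVec, Matrix.transpose_transpose, hUl2, Matrix.one_mulVec]
    simpa [dotProduct, sq] using this
  have hββ : ∑ i, β i ^ 2 = y.2 ⬝ᵥ y.2 := by
    have : β ⬝ᵥ β = y.2 ⬝ᵥ y.2 := by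
      rw [hβ, Matrix.dotProduct_mulVec, ← Matrix.mulVec_transpose,
        Matrix.mulVec_mulVec, Matrix.transpose_transpose, hUr2, Matrix.one_mulVec]
    simpa [dotProduct, sq] using this
  have hcross : α ⬝ᵥ (Ulᵀ * Ur) *ᵥ β = x.2 ⬝ᵥ y.2 := by
    rw [← Matrix.mulVec_mulVec, Matrix.dotProduct_mulVec α,
      ← Matrix.mulVec_transpose, Matrix.transpose_transpose, hUα, hUβ]
  have key := hA α β
  rw [hxq, hyq, hαα, hββ, hcross] at key
  have hsum : ∑ i, (x.2 i - y.2 i) ^ 2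
      = x.2 ⬝ᵥ x.2 + y.2 ⬝ᵥ y.2 - 2 * (x.2 ⬝ᵥ y.2) := by
    simp only [dotProduct, ← Finset.sum_add_distrib, Finset.mul_sum,
      ← Finset.sum_sub_distrib]
    exact Finset.sum_congr rfl fun i _ => by ring
  have hQx : 0 ≤ x.2 ⬝ᵥ Hl *ᵥ x.2 := by simpa using hHl.posSemidef.dotProduct_mulVec_nonneg x.2
  have hQy : 0 ≤ y.2 ⬝ᵥ Hr *ᵥ y.2 := by simpa using hHr.posSemidef.dotProduct_mulVec_nonneg y.2
  have hx0 : 0 ≤ x.1 := by nlinarith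
  have hy0 : 0 ≤ y.1 := by nlinarith
  constructor
  · rw [hsum]
    have hQ : x.2 ⬝ᵥ Hl *ᵥ x.2 + y.2 ⬝ᵥ Hr *ᵥ y.2 ≤ 2 * ch * (x.1 + y.1) := by
      linarith
    have h2 : 2 * a * η * (x.2 ⬝ᵥ Hl *ᵥ x.2 + y.2 ⬝ᵥ Hr *ᵥ y.2)
        ≤ 2 * a * η * (2 * ch * (x.1 + y.1)) :=
      mul_le_mul_of_nonneg_left hQ (by positivity)
    have hc : 2 * a * η * (2 * ch * (x.1 + y.1)) = 2 * a * (η + 1) * (x.1 + y.1) := by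
      rw [hch]; field_simp
    have hq : x.2 ⬝ᵥ x.2 + y.2 ⬝ᵥ y.2 - 2 * (x.2 ⬝ᵥ y.2)
        ≤ 2 * a * (η + 1) * (x.1 + y.1) := by linarith
    have h3 : (1 / (4 * a)) * (x.2 ⬝ᵥ x.2 + y.2 ⬝ᵥ y.2 - 2 * (x.2 ⬝ᵥ y.2))
        ≤ (1 / (4 * a)) * (2 * a * (η + 1) * (x.1 + y.1)) :=
      mul_le_mul_of_nonneg_left hq (by positivity)
    have h4 : (1 / (4 * a)) * (2 * a * (η + 1) * (x.1 + y.1))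
        = ((η + 1) / 2) * (x.1 + y.1) := by
      field_simp; ring
    rw [h4] at h3
    linarith
  · have h5 : 0 ≤ (1 - η) / 2 := by linarith
    positivity
end

section
/- Fix d ≥ 3, e ∈ {2,...,d−1}, and 1 > a_{e+1} ≥ ... ≥ a_d > 0. Let E = {z ∈ ℝ^d : z₁² + ... + z_e² + (z_{e+1}/a_{e+1})² + ... + (z_d/a_d)² ≤ 1}. For z ∈ ℝ^d write z̄ = (z₁,...,z_e) ∈ ℝ^e, and define g(x̄, ȳ) = sqrt((|x̄| + |ȳ|)² + 2 a_{e+1}² (2 − |x̄|² − |ȳ|²)). Then for all x, y ∈ E: |x̄ − ȳ| ≤ |x − y| ≤ g(x̄, ȳ). -/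
theorem stmt16 (d e : ℕ) (hd : 3 ≤ d) (he2 : 2 ≤ e) (hed : e < d)
    (a : Fin d → ℝ) (ha : ∀ k : Fin d, e ≤ (k : ℕ) → 0 < a k ∧ a k < 1)
    (hmono : ∀ k l : Fin d, e ≤ (k : ℕ) → k ≤ l → a l ≤ a k)
    (E : Set (Fin d → ℝ))
    (hE : E = {z | (∑ k ∈ Finset.univ.filter (fun k : Fin d => (k : ℕ) < e), z k ^ 2)
        + (∑ k ∈ Finset.univ.filter (fun k : Fin d => e ≤ (k : ℕ)), (z k / a k) ^ 2) ≤ 1})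
    (nb : (Fin d → ℝ) → ℝ)
    (hnb : nb = fun z =>
      Real.sqrt (∑ k ∈ Finset.univ.filter (fun k : Fin d => (k : ℕ) < e), z k ^ 2))
    (ae1 : ℝ) (hae1 : ae1 = a ⟨e, hed⟩)
    (x y : Fin d → ℝ) (hx : x ∈ E) (hy : y ∈ E) :
    nb (x - y) ≤ Real.sqrt (∑ k, (x k - y k) ^ 2) ∧
    Real.sqrt (∑ k, (x k - y k) ^ 2)
      ≤ Real.sqrt ((nb x + nb y) ^ 2 + 2 * ae1 ^ 2 * (2 - nb x ^ 2 - nb y ^ 2)) := by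
  subst hE hnb hae1
  set S1 := Finset.univ.filter (fun k : Fin d => (k : ℕ) < e) with hS1
  set S2 := Finset.univ.filter (fun k : Fin d => e ≤ (k : ℕ)) with hS2
  have hsplit : ∀ f : Fin d → ℝ, ∑ k, f k = ∑ k ∈ S1, f k + ∑ k ∈ S2, f k := by
    intro f
    rw [hS1, hS2,
      ← Finset.sum_filter_add_sum_filter_not Finset.univ (fun k : Fin d => (k : ℕ) < e)]
    congr 1
    apply Finset.sum_congr _ (fun _ _ => rfl)
    ext k; simp [not_lt]
  set A := ∑ k ∈ S1, x k ^ 2 with hA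
  set B := ∑ k ∈ S1, y k ^ 2 with hB
  have hA0 : 0 ≤ A := Finset.sum_nonneg fun k _ => sq_nonneg _
  have hB0 : 0 ≤ B := Finset.sum_nonneg fun k _ => sq_nonneg _
  set ae := a ⟨e, hed⟩ with hae
  have haepos : 0 < ae := (ha ⟨e, hed⟩ (by simp)).1
  -- bound on minor sums
  have hminor : ∀ z : Fin d → ℝ,
      A + (∑ k ∈ S2, (z k / a k) ^ 2) ≤ 1 → True := fun _ _ => trivial
  have key : ∀ z : Fin d → ℝ,
      ∑ k ∈ S2, z k ^ 2 ≤ ae ^ 2 * ∑ k ∈ S2, (z k / a k) ^ 2 := by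
    intro z
    rw [Finset.mul_sum]
    apply Finset.sum_le_sum
    intro k hk
    have hk' : e ≤ (k : ℕ) := by simpa [hS2] using hk
    have hak := ha k hk'
    have hle : a k ≤ ae := hmono ⟨e, hed⟩ k (by simp) (by simpa [Fin.le_def] using hk')
    have h1 : z k ^ 2 = (z k / a k) ^ 2 * a k ^ 2 := by
      rw [div_pow, div_mul_cancel₀ _ (pow_ne_zero 2 hak.1.ne')]
    have h2 : a k ^ 2 ≤ ae ^ 2 := by nlinarith
    rw [h1]
    nlinarith [mul_le_mul_of_nonneg_left h2 (sq_nonneg (z k / a k))]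
  have hxE : A + (∑ k ∈ S2, (x k / a k) ^ 2) ≤ 1 := hx
  have hyE : B + (∑ k ∈ S2, (y k / a k) ^ 2) ≤ 1 := hy
  have hX : ∑ k ∈ S2, x k ^ 2 ≤ ae ^ 2 * (1 - A) := by
    have := key x
    nlinarith [sq_nonneg ae]
  have hY : ∑ k ∈ S2, y k ^ 2 ≤ ae ^ 2 * (1 - B) := by
    have := key y
    nlinarith [sq_nonneg ae]
  -- Cauchy-Schwarz
  have CS : (∑ k ∈ S1, x k * y k) ^ 2 ≤ A * B := Finset.sum_mul_sq_le_sq_mul_sq S1 x y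
  have hsAB : Real.sqrt A * Real.sqrt B ≥ 0 := by positivity
  have hsA2 : Real.sqrt A ^ 2 = A := Real.sq_sqrt hA0
  have hsB2 : Real.sqrt B ^ 2 = B := Real.sq_sqrt hB0
  have hCS' : -(∑ k ∈ S1, x k * y k) ≤ Real.sqrt A * Real.sqrt B := by
    nlinarith [sq_nonneg (Real.sqrt A * Real.sqrt B)]
  have hexp : ∑ k ∈ S1, (x k - y k) ^ 2 = A + B - 2 * ∑ k ∈ S1, x k * y k := by
    rw [hA, hB, ← Finset.sum_add_distrib, Finset.mul_sum, ← Finset.sum_sub_distrib]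
    exact Finset.sum_congr rfl fun k _ => by ring
  have hS2bound : ∑ k ∈ S2, (x k - y k) ^ 2
      ≤ 2 * (∑ k ∈ S2, x k ^ 2) + 2 * (∑ k ∈ S2, y k ^ 2) := by
    rw [Finset.mul_sum, Finset.mul_sum, ← Finset.sum_add_distrib]
    exact Finset.sum_le_sum fun k _ => by nlinarith [sq_nonneg (x k + y k)]
  constructor
  · apply Real.sqrt_le_sqrt
    rw [hsplit fun k => (x k - y k) ^ 2]
    have : ∑ k ∈ S1, ((x - y) k) ^ 2 = ∑ k ∈ S1, (x k - y k) ^ 2 := by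
      exact Finset.sum_congr rfl fun k _ => by simp
    rw [this]
    have h2 : 0 ≤ ∑ k ∈ S2, (x k - y k) ^ 2 := Finset.sum_nonneg fun k _ => sq_nonneg _
    linarith
  · apply Real.sqrt_le_sqrt
    rw [hsplit fun k => (x k - y k) ^ 2]
    simp only [hsA2, hsB2]
    nlinarith [sq_nonneg (Real.sqrt A + Real.sqrt B)]
end

section
/- Let a > 0, η ∈ (0,1), ĉ = (1+η⁻¹)/2, and let H_ℓ, H_r be symmetric positive definite (d−1)×(d−1) matrices with smallest eigenvalues κ₂^ℓ, κ₂^r, such that the block matrix A(η) is positive semi-definite. Suppose (x, y) ∈ ℝ^d × ℝ^d satisfies (1/2) x̃ᵀ H_ℓ x̃ ≤ ĉ (a + x₁), (1/2) ỹᵀ H_r ỹ ≤ ĉ (a − y₁), −a ≤ x₁ ≤ y₁ ≤ a (so 0 < a − y₁ ≤ a + x₁). Then the function G̃(x,y) = (a + x₁) + (a − y₁) − (1/(4a))|x̃ − ỹ|² satisfies G̃(x,y) ≥ ((1−η)/2)(a + x₁) ≥ 0. -/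
open Matrix in
theorem stmt19 (m : ℕ) (a η : ℝ) (ha : 0 < a) (hη : η ∈ Set.Ioo (0:ℝ) 1)
    (ch : ℝ) (hch : ch = (1 + η⁻¹) / 2)
    (Hl Hr : Matrix (Fin m) (Fin m) ℝ) (hHl : Hl.PosDef) (hHr : Hr.PosDef)
    (dl dr : Fin m → ℝ) (Ul Ur : Matrix (Fin m) (Fin m) ℝ)
    (hUl : Ulᵀ * Ul = 1) (hUr : Urᵀ * Ur = 1)
    (hHl' : Hl = Ul * Matrix.diagonal dl * Ulᵀ) (hHr' : Hr = Ur * Matrix.diagonal dr * Urᵀ)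
    (hA : ∀ α β : Fin m → ℝ,
      0 ≤ 2 * a * η * (α ⬝ᵥ Matrix.diagonal dl *ᵥ α + β ⬝ᵥ Matrix.diagonal dr *ᵥ β)
        + 2 * (α ⬝ᵥ (Ulᵀ * Ur) *ᵥ β) - ∑ i, α i ^ 2 - ∑ i, β i ^ 2)
    (x y : ℝ × (Fin m → ℝ))
    (hx : (1/2) * (x.2 ⬝ᵥ Hl *ᵥ x.2) ≤ ch * (a + x.1))
    (hy : (1/2) * (y.2 ⬝ᵥ Hr *ᵥ y.2) ≤ ch * (a - y.1))
    (hx1 : -a ≤ x.1) (hxy : x.1 ≤ y.1) (hy1 : y.1 ≤ a) :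
    ((1 - η) / 2) * (a + x.1)
        ≤ (a + x.1) + (a - y.1) - (1 / (4 * a)) * ∑ i, (x.2 i - y.2 i) ^ 2
      ∧ 0 ≤ ((1 - η) / 2) * (a + x.1) := by
  obtain ⟨hη0, hη1⟩ := hη
  have hUl' : Ul * Ulᵀ = 1 := mul_eq_one_comm.mp hUl
  have hUr' : Ur * Urᵀ = 1 := mul_eq_one_comm.mp hUr
  have key := hA (Ulᵀ *ᵥ x.2) (Urᵀ *ᵥ y.2)
  have e1 : (Ulᵀ *ᵥ x.2) ⬝ᵥ Matrix.diagonal dl *ᵥ (Ulᵀ *ᵥ x.2)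
      = x.2 ⬝ᵥ Hl *ᵥ x.2 := by
    rw [hHl', Matrix.mulVec_mulVec, Matrix.dotProduct_mulVec, Matrix.dotProduct_mulVec,
      Matrix.mulVec_transpose, Matrix.vecMul_vecMul, Matrix.mul_assoc]
  have e2 : (Urᵀ *ᵥ y.2) ⬝ᵥ Matrix.diagonal dr *ᵥ (Urᵀ *ᵥ y.2)
      = y.2 ⬝ᵥ Hr *ᵥ y.2 := by
    rw [hHr', Matrix.mulVec_mulVec, Matrix.dotProduct_mulVec, Matrix.dotProduct_mulVec,
      Matrix.mulVec_transpose, Matrix.vecMul_vecMul, Matrix.mul_assoc]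
  have e3 : (Ulᵀ *ᵥ x.2) ⬝ᵥ (Ulᵀ * Ur) *ᵥ (Urᵀ *ᵥ y.2) = x.2 ⬝ᵥ y.2 := by
    rw [Matrix.mulVec_mulVec, Matrix.mul_assoc, hUr', Matrix.mul_one,
      Matrix.dotProduct_mulVec, Matrix.mulVec_transpose, Matrix.vecMul_vecMul, hUl',
      Matrix.vecMul_one]
  have e4 : ∑ i, (Ulᵀ *ᵥ x.2) i ^ 2 = ∑ i, x.2 i ^ 2 := by
    have h : (Ulᵀ *ᵥ x.2) ⬝ᵥ (Ulᵀ *ᵥ x.2) = x.2 ⬝ᵥ x.2 := by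
      rw [Matrix.dotProduct_mulVec, Matrix.mulVec_transpose, Matrix.vecMul_vecMul, hUl',
        Matrix.vecMul_one]
    simpa [dotProduct, sq] using h
  have e5 : ∑ i, (Urᵀ *ᵥ y.2) i ^ 2 = ∑ i, y.2 i ^ 2 := by
    have h : (Urᵀ *ᵥ y.2) ⬝ᵥ (Urᵀ *ᵥ y.2) = y.2 ⬝ᵥ y.2 := by
      rw [Matrix.dotProduct_mulVec, Matrix.mulVec_transpose, Matrix.vecMul_vecMul, hUr',
        Matrix.vecMul_one]
    simpa [dotProduct, sq] using h
  rw [e1, e2, e3, e4, e5] at key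
  have esum : ∑ i, (x.2 i - y.2 i) ^ 2
      = ∑ i, x.2 i ^ 2 + ∑ i, y.2 i ^ 2 - 2 * (x.2 ⬝ᵥ y.2) := by
    simp only [dotProduct, Finset.mul_sum, ← Finset.sum_add_distrib,
      ← Finset.sum_sub_distrib]
    congr 1; ext i; ring
  have hql : 0 ≤ x.2 ⬝ᵥ Hl *ᵥ x.2 := by simpa using hHl.posSemidef.dotProduct_mulVec_nonneg x.2
  have hqr : 0 ≤ y.2 ⬝ᵥ Hr *ᵥ y.2 := by simpa using hHr.posSemidef.dotProduct_mulVec_nonneg y.2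
  have hs : 0 ≤ a + x.1 := by linarith
  have ht : 0 ≤ a - y.1 := by linarith
  rw [esum]
  generalize hQl : x.2 ⬝ᵥ Hl *ᵥ x.2 = Ql at key hx hql
  generalize hQr : y.2 ⬝ᵥ Hr *ᵥ y.2 = Qr at key hy hqr
  generalize hSx : ∑ i, x.2 i ^ 2 = Sx at key ⊢
  generalize hSy : ∑ i, y.2 i ^ 2 = Sy at key ⊢
  generalize hP : x.2 ⬝ᵥ y.2 = P at key ⊢
  clear hA hHl hHr hHl' hHr' hUl hUr hUl' hUr' e1 e2 e3 e4 e5 esum hQl hQr hSx hSy hP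
  have hx2 : η * Ql ≤ (η + 1) * (a + x.1) := by
    have h := mul_le_mul_of_nonneg_left hx (le_of_lt (by positivity : (0:ℝ) < 2 * η))
    rw [hch] at h
    have e : 2 * η * ((1 + η⁻¹) / 2 * (a + x.1)) = (η + 1) * (a + x.1) := by
      field_simp
    linarith
  have hy2 : η * Qr ≤ (η + 1) * (a - y.1) := by
    have h := mul_le_mul_of_nonneg_left hy (le_of_lt (by positivity : (0:ℝ) < 2 * η))
    rw [hch] at h
    have e : 2 * η * ((1 + η⁻¹) / 2 * (a - y.1)) = (η + 1) * (a - y.1) := by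
      field_simp
    linarith
  have hle : 1 / (4 * a) * (Sx + Sy - 2 * P) ≤ (η + 1) / 2 * ((a + x.1) + (a - y.1)) := by
    rw [div_mul_eq_mul_div, div_le_iff₀ (by positivity : (0:ℝ) < 4 * a)]
    have h1 : 2 * a * (η * Ql) ≤ 2 * a * ((η + 1) * (a + x.1)) :=
      mul_le_mul_of_nonneg_left hx2 (by linarith)
    have h2 : 2 * a * (η * Qr) ≤ 2 * a * ((η + 1) * (a - y.1)) :=
      mul_le_mul_of_nonneg_left hy2 (by linarith)
    nlinarith [key, h1, h2]

  refine ⟨?_, ?_⟩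
  · have h1 : 0 ≤ (1 - η) * (a - y.1) := mul_nonneg (by linarith) ht
    linarith
  · exact mul_nonneg (by linarith : (0:ℝ) ≤ (1 - η) / 2) hs
end
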